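/- For all integers n ≥ k ≥ 0, the degenerate Stirling numbers of the second kind admit the explicit formula S_{2,λ}(n,k) = (1/k!) · ∑_{j=0}^{k} C(k,j) · (−1)^{k−j} · (j)_{n,λ}. -/

import Mathlib

open Finset

noncomputable section

/-- The generalized falling factorial `(x)_{n,λ} = x(x-λ)⋯(x-(n-1)λ)`. -/
def gff (lam x : ℝ) (n : ℕ) : ℝ := ∏ i ∈ Finset.range n, (x - i * lam)

/-- The ordinary falling factorial `(x)_r = x(x-1)⋯(x-r+1)` of a real number. -/
def ff (x : ℝ) (r : ℕ) : ℝ := ∏ i ∈ Finset.range r, (x - i)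

/-- The degenerate exponential `e_λ^x(t) = ∑_{n≥0} (x)_{n,λ} t^n/n!` as a formal power series. -/
def degExp (lam x : ℝ) : PowerSeries ℝ :=
  PowerSeries.mk fun n => gff lam x n / n.factorial

/-- `egfCoeff f n = a_n` when `f = ∑_{n≥0} a_n t^n/n!`. -/
def egfCoeff (f : PowerSeries ℝ) (n : ℕ) : ℝ := n.factorial * PowerSeries.coeff (R := ℝ) n f

/-- The formal binomial power `(1+g)^a = ∑_{k≥0} (a)_k/k! · g^k`,
intended for `g` with zero constant term (so the sum is coefficientwise finite). -/
def binomPow (a : ℝ) (g : PowerSeries ℝ) : PowerSeries ℝ :=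
  PowerSeries.mk fun n =>
    ∑ k ∈ Finset.range (n + 1), (ff a k / k.factorial) * PowerSeries.coeff (R := ℝ) n (g ^ k)

/-- `(2/(e_λ(t)+1))^α`, the `(-α)`-th formal binomial power of `(e_λ(t)+1)/2 = 1 + (e_λ(t)-1)/2`. -/
def eulerGF (lam a : ℝ) : PowerSeries ℝ :=
  binomPow (-a) (PowerSeries.C (R := ℝ) (1 / 2) * (degExp lam 1 - 1))

/-- Generalized degenerate Euler-Genocchi polynomials `A^{(r)}_{n,λ}(x)`, defined by
`∑_{n≥0} A^{(r)}_{n,λ}(x) t^n/n! = 2 t^r e_λ^x(t)/(e_λ(t)+1)`. -/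
def A (lam : ℝ) (r : ℕ) (x : ℝ) (n : ℕ) : ℝ :=
  egfCoeff (2 * PowerSeries.X ^ r * degExp lam x * (degExp lam 1 + 1)⁻¹) n

/-- Generalized degenerate Euler-Genocchi polynomials of order `α`, `A^{(r,α)}_{n,λ}(x)`,
defined by `∑_{n≥0} A^{(r,α)}_{n,λ}(x) t^n/n! = t^r (2/(e_λ(t)+1))^α e_λ^x(t)`. -/
def Aa (lam a : ℝ) (r : ℕ) (x : ℝ) (n : ℕ) : ℝ :=
  egfCoeff (PowerSeries.X ^ r * eulerGF lam a * degExp lam x) n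

/-- Degenerate Euler polynomials of order `α`:
`∑_{n≥0} E^{(α)}_{n,λ}(x) t^n/n! = (2/(e_λ(t)+1))^α e_λ^x(t)`. -/
def Epoly (lam a x : ℝ) (n : ℕ) : ℝ := egfCoeff (eulerGF lam a * degExp lam x) n

/-- Degenerate Euler polynomials `E_{n,λ}(x)`:
`∑_{n≥0} E_{n,λ}(x) t^n/n! = 2 e_λ^x(t)/(e_λ(t)+1)`. -/
def E1 (lam x : ℝ) (n : ℕ) : ℝ :=
  egfCoeff (2 * degExp lam x * (degExp lam 1 + 1)⁻¹) n

/-- Degenerate Euler numbers `E_{n,λ}`: `∑_{n≥0} E_{n,λ} t^n/n! = 2/(e_λ(t)+1)`. -/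
def Enum (lam : ℝ) (n : ℕ) : ℝ :=
  egfCoeff (2 * (degExp lam 1 + 1)⁻¹) n

/-- Degenerate Stirling numbers of the second kind:
`∑_{n≥k} S_{2,λ}(n,k) t^n/n! = (1/k!)(e_λ(t)-1)^k`. -/
def S2 (lam : ℝ) (n k : ℕ) : ℝ :=
  egfCoeff (PowerSeries.C (R := ℝ) (1 / k.factorial) * (degExp lam 1 - 1) ^ k) n

/-- Alternating degenerate power sum `T_{k,λ}(n) = ∑_{i=0}^n (-1)^i (i)_{k,λ}`. -/
def T (lam : ℝ) (k n : ℕ) : ℝ := ∑ i ∈ Finset.range (n + 1), (-1 : ℝ) ^ i * gff lam i k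
lemma gff_succ (lam x : ℝ) (n : ℕ) : gff lam x (n + 1) = gff lam x n * (x - n * lam) := by
  simp [gff, Finset.prod_range_succ]

lemma gff_vd (lam x y : ℝ) (n : ℕ) :
    gff lam (x + y) n =
      ∑ i ∈ Finset.range (n + 1), (n.choose i : ℝ) * gff lam x i * gff lam y (n - i) := by
  induction n with
  | zero => simp [gff]
  | succ n ih =>
    rw [gff_succ, ih, Finset.sum_mul]
    have key : ∀ i ∈ Finset.range (n + 1),
        (n.choose i : ℝ) * gff lam x i * gff lam y (n - i) * (x + y - n * lam) =
          (n.choose i : ℝ) * gff lam x (i + 1) * gff lam y (n - i) +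
          (n.choose i : ℝ) * gff lam x i * gff lam y (n + 1 - i) := by
      intro i hi
      rw [Finset.mem_range] at hi
      have hi' : i ≤ n := Nat.lt_succ_iff.mp hi
      have h1 : n + 1 - i = (n - i) + 1 := by omega
      rw [h1, gff_succ, gff_succ]
      have h2 : ((n - i : ℕ) : ℝ) = (n : ℝ) - i := by
        push_cast [Nat.cast_sub hi']; ring
      rw [h2]; ring
    rw [Finset.sum_congr rfl key, Finset.sum_add_distrib]
    -- LHS: ∑_{i ∈ range (n+2)} C(n+1,i) gx i gy (n+1-i)
    rw [Finset.sum_range_succ' (fun i => ((n+1).choose i : ℝ) * gff lam x i * gff lam y (n + 1 - i)) (n+1)]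
    have e1 : ∀ i ∈ Finset.range (n + 1),
        ((n+1).choose (i+1) : ℝ) * gff lam x (i+1) * gff lam y (n + 1 - (i+1)) =
          (n.choose i : ℝ) * gff lam x (i+1) * gff lam y (n - i) +
          (n.choose (i+1) : ℝ) * gff lam x (i+1) * gff lam y (n - i) := by
      intro i _
      have : n + 1 - (i + 1) = n - i := by omega
      rw [this, Nat.choose_succ_succ]
      push_cast; ring
    rw [Finset.sum_congr rfl e1, Finset.sum_add_distrib, add_assoc]
    congr 1
    -- remaining: ∑_{i<n+1} C(n,i+1) gx(i+1) gy(n-i) + C(n+1,0) gx 0 gy (n+1)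
    --   = ∑_{i<n+1} C(n,i) gx i gy (n+1-i)
    rw [Finset.sum_range_succ' (fun i => (n.choose i : ℝ) * gff lam x i * gff lam y (n + 1 - i)) n]
    congr 1
    · rw [Finset.sum_range_succ]
      simp only [Nat.choose_succ_self, Nat.cast_zero, zero_mul, add_zero]
      apply Finset.sum_congr rfl
      intro i hi
      rw [Finset.mem_range] at hi
      have : n + 1 - (i + 1) = n - i := by omega
      rw [this]
    · simp [gff]

lemma degExp_mul (lam x y : ℝ) : degExp lam x * degExp lam y = degExp lam (x + y) := by
  ext n
  rw [PowerSeries.coeff_mul]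
  rw [Finset.Nat.sum_antidiagonal_eq_sum_range_succ
    (fun i j => (PowerSeries.coeff (R := ℝ) i) (degExp lam x) * (PowerSeries.coeff (R := ℝ) j) (degExp lam y))]
  simp only [degExp, PowerSeries.coeff_mk]
  rw [gff_vd lam x y n, Finset.sum_div]
  apply Finset.sum_congr rfl
  intro i hi
  rw [Finset.mem_range] at hi
  have hi' : i ≤ n := Nat.lt_succ_iff.mp hi
  rw [Nat.cast_choose ℝ hi']
  have h1 : (i.factorial : ℝ) ≠ 0 := Nat.cast_ne_zero.mpr (Nat.factorial_ne_zero i)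
  have h2 : ((n - i).factorial : ℝ) ≠ 0 := Nat.cast_ne_zero.mpr (Nat.factorial_ne_zero _)
  have h3 : (n.factorial : ℝ) ≠ 0 := Nat.cast_ne_zero.mpr (Nat.factorial_ne_zero n)
  field_simp

lemma degExp_zero (lam : ℝ) : degExp lam 0 = 1 := by
  ext n
  cases n with
  | zero => simp [degExp, gff]
  | succ m =>
    simp [degExp, PowerSeries.coeff_one]
    left
    rw [gff]
    apply Finset.prod_eq_zero (Finset.mem_range.mpr (Nat.succ_pos m))
    simp

lemma degExp_pow (lam : ℝ) (j : ℕ) : degExp lam 1 ^ j = degExp lam (j : ℝ) := by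
  induction j with
  | zero => simp [degExp_zero]
  | succ m ih =>
    rw [pow_succ, ih, degExp_mul]
    norm_num

/-- equation (19) of the paper: for `n ≥ k ≥ 0`,
`S_{2,λ}(n,k) = (1/k!) ∑_{j=0}^k C(k,j) (-1)^{k-j} (j)_{n,λ}`. -/
theorem S2_explicit (lam : ℝ) (hlam : lam ≠ 0) (n k : ℕ) (hkn : k ≤ n) :
    S2 lam n k =
      (1 / (k.factorial : ℝ)) *
        ∑ j ∈ Finset.range (k + 1),
          (k.choose j : ℝ) * (-1 : ℝ) ^ (k - j) * gff lam (j : ℝ) n := by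
  have hcoeff : PowerSeries.coeff (R := ℝ) n ((degExp lam 1 - 1) ^ k) =
      (∑ j ∈ Finset.range (k + 1),
        (k.choose j : ℝ) * (-1 : ℝ) ^ (k - j) * gff lam (j : ℝ) n) / n.factorial := by
    rw [sub_pow, map_sum, Finset.sum_div]
    apply Finset.sum_congr rfl
    intro j hj
    rw [Finset.mem_range] at hj
    have hj' : j ≤ k := Nat.lt_succ_iff.mp hj
    rw [one_pow, mul_one, degExp_pow]
    rw [mul_comm ((-1 : PowerSeries ℝ) ^ (j + k)) _, mul_assoc]
    have hc : ((-1 : PowerSeries ℝ) ^ (j + k) * ((k.choose j : ℕ) : PowerSeries ℝ)) =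
        PowerSeries.C (R := ℝ) ((-1 : ℝ) ^ (j + k) * (k.choose j : ℝ)) := by
      rw [map_mul, map_pow, map_neg, map_one, map_natCast]
    rw [hc, PowerSeries.coeff_mul_C]
    have hsign : ((-1 : ℝ)) ^ (j + k) = (-1 : ℝ) ^ (k - j) := by
      rw [show j + k = (k - j) + 2 * j by omega, pow_add, pow_mul]
      simp
    simp only [degExp, PowerSeries.coeff_mk, hsign]
    ring
  simp only [S2, egfCoeff, PowerSeries.coeff_C_mul, hcoeff]
  have h3 : (n.factorial : ℝ) ≠ 0 := Nat.cast_ne_zero.mpr (Nat.factorial_ne_zero n)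
  field_simp
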